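/- arXiv:1809.02086 — 2 statements merged into one kernel-verified Lean document; each statement's English description precedes it below -/
import Mathlib

section
/- Let α ∈ (0,1) be irrational with best approximation denominators q_n, and ω(m) = Σ_{i=1}^m z_i where z_i = 1 if {iα} ∈ [0,1/2) and z_i = -1 otherwise. If q_n is odd and k is a positive integer with k q_n < q_{n+1}, then |ω(k q_n)| ≤ k. -/
/-!
Let `p/q = p_n/q_n` and `δ = qα - p`, so `|δ| ≤ 1/q_{n+1}`. On a block `(a, a + q]` with
`(a + q)|δ| < 1` we have `q·iα = ip + iδ` with `⌊iδ⌋ = ⌊δ⌋`, so the point `{iα}` lies in the cell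
`[r/q, (r+1)/q)` with `r = (ip + ⌊δ⌋) mod q`. As `p` is coprime to `q`, the `q` points of the block
occupy the `q` cells one each. For `q = 2l + 1` at most `l + 1` cells meet `[0, 1/2)` and at most
`l + 1` meet `[1/2, 1)`, so the block contributes at most `1` in absolute value to `ω`. Since
`kq < q_{n+1}`, the interval `[1, kq]` splits into `k` such blocks.
-/

/-- The ±1 coding of the rotation orbit: `1` if `{θ + iα} ∈ [0,1/2)`, `-1` otherwise. -/
noncomputable def zCode (α θ : ℝ) (i : ℕ) : ℤ :=
  if Int.fract (θ + i * α) < 1 / 2 then 1 else -1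

/-- The deterministic walk `ω(θ, m) = Σ_{i=1}^m z_i(θ)`. -/
noncomputable def walk (α θ : ℝ) (m : ℕ) : ℤ :=
  ∑ i ∈ Finset.Icc 1 m, zCode α θ i

open Finset

namespace GenContFract

variable {K : Type*} [Field K] [LinearOrder K] [FloorRing K]

theorem exists_int_contsAux_of (v : K) (n : ℕ) :
    ∃ a b : ℤ, (GenContFract.of v).contsAux n = ⟨a, b⟩ := by
  induction n using Nat.twoStepInduction with
  | zero => exact ⟨1, 0, by simp [zeroth_contAux_eq_one_zero]⟩
  | one => exact ⟨⌊v⌋, 1, by simp [of_h_eq_floor]⟩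
  | more n ih₀ ih₁ =>
    obtain ⟨a₀, b₀, h₀⟩ := ih₀
    obtain ⟨a₁, b₁, h₁⟩ := ih₁
    cases hs : (GenContFract.of v).s.get? n with
    | none =>
      exact ⟨a₁, b₁, by rw [contsAux_stable_step_of_terminated hs, h₁]⟩
    | some gp =>
      obtain ⟨ha, z, hz⟩ := of_partNum_eq_one_and_exists_int_partDen_eq hs
      refine ⟨z * a₁ + a₀, z * b₁ + b₀, ?_⟩
      rw [contsAux_recurrence hs h₀ h₁, ha, hz]
      push_cast
      ring_nf

theorem exists_int_nums_dens_of (v : K) (n : ℕ) :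
    ∃ a b : ℤ, (GenContFract.of v).nums n = a ∧ (GenContFract.of v).dens n = b := by
  obtain ⟨a, b, h⟩ := exists_int_contsAux_of v (n + 1)
  exact ⟨a, b, by rw [num_eq_conts_a, nth_cont_eq_succ_nth_contAux, h],
    by rw [den_eq_conts_b, nth_cont_eq_succ_nth_contAux, h]⟩

theorem exists_isCoprime_nums_dens_of [IsStrictOrderedRing K] {v : K} {n : ℕ}
    (h : ¬(GenContFract.of v).TerminatedAt n) :
    ∃ p q : ℤ, (GenContFract.of v).nums n = p ∧ (GenContFract.of v).dens n = q ∧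
      IsCoprime p q := by
  obtain ⟨p, q, hp, hq⟩ := exists_int_nums_dens_of v n
  obtain ⟨p', q', hp', hq'⟩ := exists_int_nums_dens_of v (n + 1)
  have hdet := (SimpContFract.of v).determinant h
  simp only [SimpContFract.of, hp, hq, hp', hq'] at hdet
  have hdet : p * q' - q * p' = (-1) ^ (n + 1) := by exact_mod_cast hdet
  refine ⟨p, q, hp, hq, ?_⟩
  rcases neg_one_pow_eq_or ℤ (n + 1) with hsign | hsign <;> rw [hsign] at hdet
  exacts [⟨q', -p', by linear_combination hdet⟩, ⟨-q', p', by linear_combination -hdet⟩]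

theorem abs_dens_mul_sub_nums_le [IsStrictOrderedRing K] {v : K} {n : ℕ}
    (h : ¬(GenContFract.of v).TerminatedAt n) :
    |(GenContFract.of v).dens n * v - (GenContFract.of v).nums n| ≤
      1 / (GenContFract.of v).dens (n + 1) := by
  set A := (GenContFract.of v).nums n
  set B := (GenContFract.of v).dens n
  set B' := (GenContFract.of v).dens (n + 1)
  have hB : 0 < B := zero_lt_one.trans_le <|
    monotone_nat_of_le_succ (f := (GenContFract.of v).dens) (fun _ ↦ of_den_mono) n.zero_le
  have happrox : |v - A / B| ≤ 1 / (B * B') := conv_eq_num_div_den (g := GenContFract.of v) ▸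
    abs_sub_convs_le h
  calc |B * v - A| = B * |v - A / B| := by
        rw [← abs_of_pos hB, ← abs_mul, abs_of_pos hB, mul_sub, mul_div_cancel₀ _ hB.ne']
    _ ≤ B * (1 / (B * B')) := by gcongr
    _ = 1 / B' := by field_simp

end GenContFract

section FloorRing

variable {K : Type*} [Field K] [LinearOrder K] [IsStrictOrderedRing K] [FloorRing K]

theorem Int.floor_natCast_mul_fract (q : ℕ) (x : K) :
    ⌊(q : K) * Int.fract x⌋ = ⌊(q : K) * x⌋ % q := by
  rcases Nat.eq_zero_or_pos q with rfl | hq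
  · simp
  have hx : ⌊x⌋ = ⌊(q : K) * x⌋ / q := by
    rw [← Int.floor_div_natCast, mul_div_cancel_left₀ _ (by positivity)]
  rw [Int.emod_def, ← hx, ← Int.floor_sub_intCast, Int.fract]
  push_cast
  ring_nf

theorem Int.floor_natCast_mul_eq_floor {m : ℕ} {δ : K} (hm : 0 < m) (h : m * |δ| < 1) :
    ⌊(m : K) * δ⌋ = ⌊δ⌋ := by
  have hm : (1 : K) ≤ m := by exact_mod_cast hm
  rcases le_or_gt 0 δ with hδ | hδ
  · rw [abs_of_nonneg hδ] at h
    rw [Int.floor_eq_zero_iff.2 ⟨by positivity, h⟩, Int.floor_eq_zero_iff.2 ⟨hδ, by nlinarith⟩]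
  · rw [abs_of_neg hδ] at h
    rw [Int.floor_eq_iff (z := -1).2 ⟨by push_cast; linarith, by push_cast; nlinarith⟩,
      Int.floor_eq_iff (z := -1).2 ⟨by push_cast; nlinarith, by push_cast; linarith⟩]

theorem Int.floor_odd_mul_mem_Icc_of_lt_half {l : ℕ} {y : K} (h0 : 0 ≤ y) (h : y < 1 / 2) :
    ⌊(2 * l + 1 : K) * y⌋ ∈ Icc (0 : ℤ) l := by
  rw [mem_Icc, Int.floor_nonneg, Int.floor_le_iff]
  push_cast
  constructor <;> nlinarith

theorem Int.floor_odd_mul_mem_Icc_of_half_le {l : ℕ} {y : K} (h : 1 / 2 ≤ y) (h1 : y < 1) :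
    ⌊(2 * l + 1 : K) * y⌋ ∈ Icc (l : ℤ) (2 * l) := by
  rw [mem_Icc, Int.le_floor, Int.floor_le_iff]
  push_cast
  constructor <;> nlinarith

end FloorRing

theorem injOn_mul_add_emod_Ioc {p : ℤ} {q : ℕ} (hpq : IsCoprime p q) (c : ℤ) (a : ℕ) :
    Set.InjOn (fun i : ℕ ↦ (i * p + c) % q) (Ioc a (a + q)) := by
  intro i hi j hj hij
  simp only [coe_Ioc, Set.mem_Ioc] at hi hj
  have hdvd : (q : ℤ) ∣ (j - i : ℤ) * p := by
    rw [sub_mul]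
    exact (Int.ModEq.add_right_cancel' c hij).dvd
  have := Int.eq_zero_of_abs_lt_dvd (hpq.symm.dvd_of_dvd_mul_right hdvd) (by rw [abs_lt]; omega)
  omega

theorem abs_sum_zCode_le_one_of_injOn {α θ : ℝ} {q : ℕ} (hq : Odd q) {B : Finset ℕ}
    (hB : #B = q) (hinj : Set.InjOn (fun i : ℕ ↦ ⌊(q : ℝ) * Int.fract (θ + i * α)⌋) B) :
    |∑ i ∈ B, zCode α θ i| ≤ 1 := by
  obtain ⟨l, rfl⟩ := hq
  set f := fun i : ℕ ↦ ⌊((2 * l + 1 : ℕ) : ℝ) * Int.fract (θ + i * α)⌋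
  set below := B.filter fun i : ℕ ↦ Int.fract (θ + i * α) < 1 / 2
  set above := B.filter fun i : ℕ ↦ ¬Int.fract (θ + i * α) < 1 / 2
  have hbelow : #below ≤ #(Icc (0 : ℤ) l) := by
    refine card_le_card_of_injOn f (fun i hi ↦ ?_) (hinj.mono (filter_subset _ _))
    have hi := (mem_filter.1 hi).2
    simpa [f] using Int.floor_odd_mul_mem_Icc_of_lt_half (Int.fract_nonneg _) hi
  have habove : #above ≤ #(Icc (l : ℤ) (2 * l)) := by
    refine card_le_card_of_injOn f (fun i hi ↦ ?_) (hinj.mono (filter_subset _ _))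
    have hi := le_of_not_gt (mem_filter.1 hi).2
    simpa [f] using Int.floor_odd_mul_mem_Icc_of_half_le hi (Int.fract_lt_one _)
  have hsum : ∑ i ∈ B, zCode α θ i = #below - #above := by
    simp [zCode, sum_ite, below, above, sub_eq_add_neg]
  have hcard : #below + #above = #B := card_filter_add_card_filter_not _
  simp only [Int.card_Icc] at hbelow habove
  rw [hsum, abs_le]
  omega

theorem abs_sum_zCode_Ioc_le_one {α : ℝ} {p : ℤ} {q : ℕ} (hq : Odd q) (hpq : IsCoprime p q)
    {a : ℕ} (h : (a + q) * |q * α - p| < 1) : |∑ i ∈ Ioc a (a + q), zCode α 0 i| ≤ 1 := by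
  refine abs_sum_zCode_le_one_of_injOn hq (by simp) <|
    (injOn_mul_add_emod_Ioc hpq ⌊(q : ℝ) * α - p⌋ a).congr fun i hi ↦ ?_
  simp only [coe_Ioc, Set.mem_Ioc] at hi
  have hi' : (i : ℝ) * |q * α - p| < 1 :=
    lt_of_le_of_lt (mul_le_mul_of_nonneg_right (by exact_mod_cast hi.2) (abs_nonneg _)) h
  have hsplit : (q : ℝ) * (i * α) = ((i * p : ℤ) : ℝ) + i * (q * α - p) := by
    push_cast
    ring
  rw [zero_add, Int.floor_natCast_mul_fract, hsplit, Int.floor_intCast_add,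
    Int.floor_natCast_mul_eq_floor (by omega) hi']

theorem walk_add (α θ : ℝ) (a b : ℕ) :
    walk α θ (a + b) = walk α θ a + ∑ i ∈ Ioc a (a + b), zCode α θ i := by
  have hIcc (m : ℕ) : Icc 1 m = Ioc 0 m := Icc_add_one_left_eq_Ioc 0 m
  rw [walk, walk, hIcc, hIcc, sum_Ioc_consecutive _ a.zero_le (a.le_add_right b)]

theorem abs_walk_mul_le {α θ : ℝ} {q k : ℕ}
    (h : ∀ j < k, |∑ i ∈ Ioc (j * q) (j * q + q), zCode α θ i| ≤ 1) :
    |walk α θ (k * q)| ≤ k := by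
  induction k with
  | zero => simp [walk]
  | succ k ih =>
    rw [Nat.succ_mul, walk_add]
    calc _ ≤ |walk α θ (k * q)| + |∑ i ∈ Ioc (k * q) (k * q + q), zCode α θ i| := abs_add_le _ _
      _ ≤ k + 1 := add_le_add (ih fun j hj ↦ h j (by omega)) (h k k.lt_succ_self)
      _ = (k + 1 : ℕ) := by push_cast; rfl

theorem walk_multiple_of_odd_denominator_general (α : ℝ) (hα : Irrational α)
    (n : ℕ) (qn : ℕ)
    (hqn : (qn : ℝ) = (GenContFract.of α).dens n) (hodd : Odd qn)
    (k : ℕ) (hk : ((k * qn : ℕ) : ℝ) < (GenContFract.of α).dens (n + 1)) :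
    |walk α 0 (k * qn)| ≤ (k : ℤ) := by
  have hterm : ¬(GenContFract.of α).TerminatedAt n := fun h ↦ hα <| by
    obtain ⟨r, hr⟩ := (GenContFract.terminates_iff_rat α).1 ⟨n, h⟩
    exact ⟨r, hr.symm⟩
  obtain ⟨p, q, hp, hq, hpq⟩ := GenContFract.exists_isCoprime_nums_dens_of hterm
  obtain rfl : q = qn := by exact_mod_cast hq.symm.trans hqn.symm
  have happrox := GenContFract.abs_dens_mul_sub_nums_le hterm
  rw [hp, hq, Int.cast_natCast] at happrox
  have hD : 0 < (GenContFract.of α).dens (n + 1) := (Nat.cast_nonneg _).trans_lt hk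
  refine abs_walk_mul_le fun j hj ↦ abs_sum_zCode_Ioc_le_one hodd hpq ?_
  calc (((j * qn : ℕ) : ℝ) + qn) * |qn * α - p|
      ≤ ((k * qn : ℕ) : ℝ) * (1 / (GenContFract.of α).dens (n + 1)) := by
        gcongr
        exact_mod_cast (Nat.succ_mul j qn).symm.trans_le (Nat.mul_le_mul_right qn hj)
    _ < 1 := by rwa [mul_one_div, div_lt_one hD]

/-- If `q_n` is odd and `k q_n < q_{n+1}` then `|ω(k q_n)| ≤ k`. -/
theorem walk_multiple_of_odd_denominator (α : ℝ) (hα : Irrational α)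
    (hα01 : α ∈ Set.Ioo (0 : ℝ) 1) (n : ℕ) (qn : ℕ)
    (hqn : (qn : ℝ) = (GenContFract.of α).dens n) (hodd : Odd qn)
    (k : ℕ) (hk0 : 0 < k) (hk : ((k * qn : ℕ) : ℝ) < (GenContFract.of α).dens (n + 1)) :
    |walk α 0 (k * qn)| ≤ (k : ℤ) :=
  walk_multiple_of_odd_denominator_general α hα n qn hqn hodd k hk
end

section
/- Let α ∈ (0,1) be irrational with best approximation denominators q_n. Define M(θ, k) = max_{1≤ℓ≤k} ω(θ, ℓ) where ω(θ, ℓ) = Σ_{i=1}^ℓ z_i(θ) and z_i(θ) = ±1 according to whether {θ + iα} ∈ [0,1/2) or [1/2,1). Then for every θ and every k with q_n < k ≤ q_{n+1}, M(θ, k) ≤ q_1 + 3⌈k/q_n⌉ + 3 Σ_{j=2}^n ⌈q_j/q_{j-1}⌉. -/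
/-- `M(θ, k) = max_{1 ≤ ℓ ≤ k} ω(θ, ℓ)`. -/
noncomputable def maxWalk (α θ : ℝ) (k : ℕ) : ℤ :=
  sSup {m : ℤ | ∃ ℓ, 1 ≤ ℓ ∧ ℓ ≤ k ∧ walk α θ ℓ = m}

/-- `m(θ, k) = min_{1 ≤ ℓ ≤ k} ω(θ, ℓ)`. -/
noncomputable def minWalk (α θ : ℝ) (k : ℕ) : ℤ :=
  sInf {m : ℤ | ∃ ℓ, 1 ≤ ℓ ∧ ℓ ≤ k ∧ walk α θ ℓ = m}

open Finset

section Walk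

variable {α : ℝ}

theorem walk_eq_two_mul_card_sub (α θ : ℝ) (m : ℕ) :
    walk α θ m = 2 * #{i ∈ Icc 1 m | Int.fract (θ + (i : ℕ) * α) < 1 / 2} - m := by
  have h := card_filter_add_card_filter_not (s := Icc (1 : ℕ) m)
    (fun i : ℕ => Int.fract (θ + i * α) < 1 / 2)
  simp only [walk, zCode, sum_ite, sum_const, nsmul_eq_mul, Nat.card_Icc] at h ⊢
  omega

theorem walk_le (α θ : ℝ) (m : ℕ) : walk α θ m ≤ m := by
  have := card_filter_le (Icc (1 : ℕ) m) (fun i : ℕ => Int.fract (θ + i * α) < 1 / 2)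
  rw [Nat.card_Icc] at this
  rw [walk_eq_two_mul_card_sub]
  omega

theorem walk_succ (α θ : ℝ) (m : ℕ) : walk α θ (m + 1) = walk α θ m + zCode α θ (m + 1) :=
  sum_Icc_succ_top (by omega) _

theorem walk_add_s14 (α θ : ℝ) (s m : ℕ) :
    walk α θ (s + m) = walk α θ s + walk α (θ + s * α) m := by
  induction m with
  | zero => simp [walk]
  | succ m ih =>
    have hz : zCode α θ (s + m + 1) = zCode α (θ + s * α) (m + 1) := by
      simp only [zCode]; push_cast; ring_nf
    rw [← add_assoc, walk_succ, ih, walk_succ, hz, add_assoc]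

theorem walk_mul_le {N : ℕ} {c : ℤ} (hN : ∀ θ, walk α θ N ≤ c) (b : ℕ) (θ : ℝ) :
    walk α θ (b * N) ≤ b * c := by
  induction b generalizing θ with
  | zero => simp [walk]
  | succ b ih =>
    rw [add_mul, one_mul, walk_add_s14]
    have := hN (θ + (b * N : ℕ) * α)
    push_cast at this ⊢
    linarith [ih θ]

theorem exists_walk_le_div_mul_add {N : ℕ} {c : ℤ} (hN : ∀ θ, walk α θ N ≤ c) (θ : ℝ) (ℓ : ℕ) :
    ∃ θ', walk α θ ℓ ≤ (ℓ / N : ℕ) * c + walk α θ' (ℓ % N) := by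
  refine ⟨θ + (ℓ / N * N : ℕ) * α, ?_⟩
  conv_lhs => rw [← Nat.div_add_mod' ℓ N, walk_add_s14]
  linarith [walk_mul_le hN (ℓ / N) θ]

end Walk

section Grid

variable {q : ℕ} {s δ : ℝ} {m : ℤ}

theorem natCast_mul_fract_add_div (hq : 0 < q) (x : ℝ) (a : ℤ) :
    (q : ℝ) * Int.fract (x + a / q) = Int.fract (q * x) + ((⌊q * x⌋ + a) % (q : ℤ) : ℤ) := by
  have hq' : (q : ℝ) ≠ 0 := by positivity
  have hfloor : ⌊x + a / q⌋ = (⌊q * x⌋ + a) / (q : ℤ) := by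
    rw [show x + a / q = (q * x + a) / q by field_simp, Int.floor_div_natCast,
      Int.floor_add_intCast]
  rw [Int.fract, Int.fract, hfloor, Int.emod_def]
  push_cast
  field_simp
  ring

theorem injOn_emod_add_mul {p : ℤ} (hp : IsCoprime p q) (c : ℤ) :
    Set.InjOn (fun i : ℕ => (c + i * p) % (q : ℤ)) (Icc 1 q) := by
  intro i hi j hj hij
  simp only [coe_Icc, Set.mem_Icc] at hi hj
  have hdvd : (q : ℤ) ∣ (i - j : ℤ) * p := by
    rw [sub_mul]
    exact Int.ModEq.dvd (Int.ModEq.add_left_cancel' c hij.symm)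
  have := Int.eq_zero_of_abs_lt_dvd (hp.symm.dvd_of_dvd_mul_right hdvd)
    (by rw [abs_sub_lt_iff]; omega)
  omega

theorem fract_add_mul_eq_fract_grid_add (hq : 0 < q) (θ α : ℝ) (p : ℤ) (i : ℕ) :
    Int.fract (θ + i * α) = Int.fract
      ((Int.fract (q * θ) + ((⌊q * θ⌋ + i * p) % (q : ℤ) : ℤ)) / q + i * (α - p / q)) := by
  have hq' : (q : ℝ) ≠ 0 := by positivity
  have hgrid := natCast_mul_fract_add_div hq θ (i * p)
  rw [← hgrid, mul_div_cancel_left₀ _ hq', ← Int.fract_sub_intCast _ ⌊θ + (i * p : ℤ) / q⌋]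
  congr 1
  rw [Int.fract]
  push_cast
  field_simp
  ring

theorem two_mul_lt_or_le_add_one_of_fract_lt_half (hq : 0 < q) (hs : 0 ≤ s) (hs1 : s < 1)
    (hm : 0 ≤ m) (hδ0 : 0 ≤ δ) (hδ : δ ≤ 1 / q)
    (h : Int.fract ((s + m) / q + δ) < 1 / 2) : 2 * m < q ∨ (q : ℤ) ≤ m + 1 := by
  have hq' : (0 : ℝ) < q := by exact_mod_cast hq
  have hδq : δ * q ≤ 1 := by rwa [← le_div_iff₀ hq']
  have hy : (s + m) / q * q = s + m := div_mul_cancel₀ _ hq'.ne'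
  by_cases hwrap : (s + m) / q + δ < 1
  · rw [Int.fract_eq_self.mpr ⟨by positivity, hwrap⟩] at h
    have := mul_lt_mul_of_pos_right (by linarith : (s + m) / q < 1 / 2) hq'
    left; exact_mod_cast (by linarith : (2 * m : ℝ) < q)
  · have := mul_le_mul_of_nonneg_right (not_lt.mp hwrap) hq'.le
    have : (q : ℤ) < m + 2 := by exact_mod_cast (by linarith : (q : ℝ) < m + 2)
    right; omega

theorem two_mul_lt_add_two_of_fract_lt_half (hq : 2 ≤ q) (hs : 0 ≤ s) (hs1 : s < 1)
    (hm : 0 ≤ m) (hmq : m < q) (hδ0 : δ ≤ 0) (hδ : -(1 / q) ≤ δ)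
    (h : Int.fract ((s + m) / q + δ) < 1 / 2) : 2 * m < q + 2 := by
  have hq' : (2 : ℝ) ≤ q := by exact_mod_cast hq
  have hmq' : (m : ℝ) + 1 ≤ q := by exact_mod_cast hmq
  have hδq : -1 ≤ δ * q := by rwa [← div_le_iff₀ (by positivity), neg_div]
  have hy : (s + m) / q * q = s + m := div_mul_cancel₀ _ (by positivity)
  have hy0 : 0 ≤ (s + m) / q := by positivity
  have hy1 : (s + m) / q < 1 := by rw [div_lt_one (by positivity)]; linarith
  have hhalf : 1 / (q : ℝ) ≤ 1 / 2 := by gcongr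
  by_cases hwrap : 0 ≤ (s + m) / q + δ
  · rw [Int.fract_eq_self.mpr ⟨hwrap, by linarith⟩] at h
    have := mul_lt_mul_of_pos_right h (by positivity : (0 : ℝ) < q)
    exact_mod_cast (by linarith : (2 * m : ℝ) < q + 2)
  · rw [← Int.fract_add_one, Int.fract_eq_self.mpr ⟨by linarith, by linarith⟩] at h
    linarith

theorem abs_natCast_mul_sub_div_le {α : ℝ} {p : ℤ} {i : ℕ} (hq : 0 < q) (hi : i ≤ q) :
    |(i : ℝ) * (α - p / q)| ≤ |q * α - p| := by
  have hq' : (0 : ℝ) < q := by exact_mod_cast hq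
  calc |(i : ℝ) * (α - p / q)| ≤ q * |α - p / q| := by
        rw [abs_mul, Nat.abs_cast]; gcongr
    _ = |q * α - p| := by
        rw [← abs_of_pos hq', ← abs_mul, abs_of_pos hq', mul_sub, mul_div_cancel₀ _ hq'.ne']

theorem card_filter_fract_lt_half_le {α : ℝ} {p : ℤ} (hq : 2 ≤ q) (hp : IsCoprime p q)
    (happ : |q * α - p| ≤ 1 / q) (θ : ℝ) :
    #{i ∈ Icc 1 q | Int.fract (θ + (i : ℕ) * α) < 1 / 2} ≤ (q + 1) / 2 + 1 := by
  have hq0 : 0 < q := by omega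
  -- `{θ + i p / q} = (s + m i) / q`, and `i ↦ m i` is injective on `[1, q]`.
  set s := Int.fract ((q : ℝ) * θ)
  set m : ℕ → ℤ := fun i => (⌊(q : ℝ) * θ⌋ + i * p) % (q : ℤ)
  have hs : 0 ≤ s ∧ s < 1 := ⟨Int.fract_nonneg _, Int.fract_lt_one _⟩
  have hm : ∀ i, 0 ≤ m i ∧ m i < q := fun i =>
    ⟨Int.emod_nonneg _ (by omega), Int.emod_lt_of_pos _ (by omega)⟩
  have hδ : ∀ i ∈ Icc 1 q, |(i : ℝ) * (α - p / q)| ≤ 1 / q := fun i hi =>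
    (abs_natCast_mul_sub_div_le hq0 (mem_Icc.mp hi).2).trans happ
  have hinj := (injOn_emod_add_mul hp (⌊(q : ℝ) * θ⌋)).mono
    (coe_subset.mpr (filter_subset (fun i : ℕ => Int.fract (θ + i * α) < 1 / 2) _))
  rcases le_or_gt (p / q : ℝ) α with hε | hε
  · calc _ ≤ #(insert ((q : ℤ) - 1) (Ico 0 (((q : ℤ) + 1) / 2))) := by
          refine card_le_card_of_injOn m (fun i hi => ?_) hinj
          obtain ⟨hi, hfr⟩ := mem_filter.mp hi
          rw [fract_add_mul_eq_fract_grid_add hq0] at hfr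
          have := two_mul_lt_or_le_add_one_of_fract_lt_half hq0 hs.1 hs.2 (hm i).1
            (mul_nonneg (Nat.cast_nonneg i) (sub_nonneg.mpr hε)) (le_of_abs_le (hδ i hi)) hfr
          have := hm i
          simp only [coe_insert, coe_Ico, Set.mem_insert_iff, Set.mem_Ico]
          omega
      _ ≤ _ := by
          have := card_insert_le ((q : ℤ) - 1) (Ico 0 (((q : ℤ) + 1) / 2))
          rw [Int.card_Ico] at this
          omega
  · calc _ ≤ #(Ico 0 (((q : ℤ) + 1) / 2 + 1)) := by
          refine card_le_card_of_injOn m (fun i hi => ?_) hinj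
          obtain ⟨hi, hfr⟩ := mem_filter.mp hi
          rw [fract_add_mul_eq_fract_grid_add hq0] at hfr
          have := two_mul_lt_add_two_of_fract_lt_half hq hs.1 hs.2 (hm i).1 (hm i).2
            (mul_nonpos_of_nonneg_of_nonpos (Nat.cast_nonneg i) (sub_nonpos.mpr hε.le))
            (neg_le_of_abs_le (hδ i hi)) hfr
          have := hm i
          simp only [coe_Ico, Set.mem_Ico]
          omega
      _ ≤ _ := by rw [Int.card_Ico]; omega

theorem walk_le_three_of_abs_mul_sub_le {α : ℝ} {p : ℤ} (hp : IsCoprime p q)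
    (happ : |q * α - p| ≤ 1 / q) (θ : ℝ) : walk α θ q ≤ 3 := by
  rcases lt_or_ge q 2 with hq | hq
  · have := walk_le α θ q
    omega
  · have := card_filter_fract_lt_half_le hq hp happ θ
    rw [walk_eq_two_mul_card_sub]
    omega

end Grid

namespace GenContFract

variable {K : Type*} [Field K] [LinearOrder K] [FloorRing K]

theorem exists_int_eq_contsAux (v : K) :
    ∀ n, ∃ a b : ℤ, (GenContFract.of v).contsAux n = ⟨a, b⟩
  | 0 => ⟨1, 0, by simp [zeroth_contAux_eq_one_zero]⟩
  | 1 => ⟨⌊v⌋, 1, by simp [first_contAux_eq_h_one, of_h_eq_floor]⟩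
  | n + 2 => by
    obtain ⟨a₁, b₁, h₁⟩ := exists_int_eq_contsAux v (n + 1)
    rcases hs : (GenContFract.of v).s.get? n with _ | gp
    · exact ⟨a₁, b₁, by rw [contsAux_stable_step_of_terminated hs, h₁]⟩
    · obtain ⟨a₀, b₀, h₀⟩ := exists_int_eq_contsAux v n
      obtain ⟨hgpa, z, hz⟩ := of_partNum_eq_one_and_exists_int_partDen_eq hs
      refine ⟨z * a₁ + a₀, z * b₁ + b₀, ?_⟩
      rw [contsAux_recurrence hs h₀ h₁, hgpa, hz]
      push_cast
      ring_nf

theorem one_le_of_den [IsStrictOrderedRing K] (v : K) (n : ℕ) :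
    1 ≤ (GenContFract.of v).dens n :=
  zeroth_den_eq_one (g := GenContFract.of v) ▸
    monotone_nat_of_le_succ (f := (GenContFract.of v).dens) (fun _ => of_den_mono) n.zero_le

end GenContFract

open GenContFract in
theorem exists_isCoprime_abs_mul_sub_le {α : ℝ} (hα : Irrational α) {q n : ℕ}
    (hq : (q : ℝ) = (GenContFract.of α).dens n) :
    ∃ p : ℤ, IsCoprime p q ∧ |q * α - p| ≤ 1 / q := by
  have hterm : ¬(GenContFract.of α).TerminatedAt n := fun h =>
    let ⟨r, hr⟩ := (terminates_iff_rat α).mp ⟨n, h⟩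
    hα ⟨r, hr.symm⟩
  obtain ⟨p, q', hn⟩ := exists_int_eq_contsAux α (n + 1)
  obtain ⟨p₁, q₁, hn₁⟩ := exists_int_eq_contsAux α (n + 2)
  have hnum : (GenContFract.of α).nums n = p := by
    rw [num_eq_conts_a, nth_cont_eq_succ_nth_contAux, hn]
  have hden : (GenContFract.of α).dens n = q' := by
    rw [den_eq_conts_b, nth_cont_eq_succ_nth_contAux, hn]
  have hq' : (q : ℤ) = q' := by exact_mod_cast hq.trans hden
  have hdet := SimpContFract.determinant (s := ⟨_, of_isSimpContFract α⟩) hterm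
  simp only [num_eq_conts_a, den_eq_conts_b, nth_cont_eq_succ_nth_contAux, hn, hn₁] at hdet
  have hdet' : p * q₁ - q' * p₁ = (-1) ^ (n + 1) := by exact_mod_cast hdet
  refine ⟨p, ?_, ?_⟩
  · rw [hq']
    rcases neg_one_pow_eq_or ℤ (n + 1) with h | h <;> rw [h] at hdet'
    · exact ⟨q₁, -p₁, by linear_combination hdet'⟩
    · exact ⟨-q₁, p₁, by linear_combination -hdet'⟩
  · have hqpos : (0 : ℝ) < q := hq ▸ zero_lt_one.trans_le (one_le_of_den α n)
    have happ := abs_sub_convs_le hterm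
    rw [conv_eq_num_div_den, hnum, ← hq] at happ
    calc |q * α - p| = q * |α - p / q| := by
          rw [← abs_of_pos hqpos, ← abs_mul, abs_of_pos hqpos]; congr 1; field_simp
      _ ≤ q * (1 / (q * (GenContFract.of α).dens (n + 1))) := by gcongr
      _ ≤ 1 / q := by
          rw [← div_eq_mul_one_div, div_mul_cancel_left₀ hqpos.ne', one_div]
          gcongr
          exact hq ▸ of_den_mono

theorem natCast_div_le_ceil_div {a b : ℕ} (h : a ≤ b) (d : ℕ) :
    ((a / d : ℕ) : ℤ) ≤ ⌈(b : ℝ) / d⌉ := by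
  rw [← Int.cast_le (R := ℝ), Int.cast_natCast]
  exact (Nat.cast_div_le.trans (by gcongr)).trans (Int.le_ceil _)

theorem walk_le_of_lt {α : ℝ} {q : ℕ → ℕ} {c : ℤ} (hc : 0 ≤ c) (hq : ∀ n, 0 < q n)
    (hq01 : q 0 ≤ q 1) (hblock : ∀ n θ, walk α θ (q n) ≤ c) :
    ∀ n θ r, r < q n → walk α θ r ≤ q 1 + c * ∑ j ∈ Icc 2 n, ⌈(q j : ℝ) / (q (j - 1) : ℝ)⌉
  | 0, θ, r, hr | 1, θ, r, hr => by
    have := walk_le α θ r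
    rw [Icc_eq_empty (by omega), sum_empty]
    omega
  | n + 2, θ, r, hr => by
    obtain ⟨θ', hsplit⟩ := exists_walk_le_div_mul_add (hblock (n + 1)) θ r
    have htail := walk_le_of_lt hc hq hq01 hblock (n + 1) θ' _ (Nat.mod_lt r (hq (n + 1)))
    have hhead := mul_le_mul_of_nonneg_right (natCast_div_le_ceil_div hr.le (q (n + 1))) hc
    rw [sum_Icc_succ_top (by omega), Nat.add_sub_cancel]
    linarith

theorem maxWalk_le {α θ : ℝ} {k : ℕ} {b : ℤ} (hk : 1 ≤ k)
    (h : ∀ ℓ, 1 ≤ ℓ → ℓ ≤ k → walk α θ ℓ ≤ b) : maxWalk α θ k ≤ b :=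
  csSup_le ⟨_, 1, le_rfl, hk, rfl⟩ fun _ ⟨ℓ, hℓ1, hℓk, hℓ⟩ => hℓ ▸ h ℓ hℓ1 hℓk

theorem maxWalk_global_bound_general (α : ℝ) (hα : Irrational α) (q : ℕ → ℕ)
    (hq : ∀ j, (q j : ℝ) = (GenContFract.of α).dens j)
    (n : ℕ) (θ : ℝ) (k : ℕ) (hk1 : q n < k) :
    maxWalk α θ k ≤ (q 1 : ℤ) + 3 * ⌈(k : ℝ) / (q n : ℝ)⌉ +
      3 * ∑ j ∈ Finset.Icc 2 n, ⌈(q j : ℝ) / (q (j - 1) : ℝ)⌉ := by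
  have hpos : ∀ j, 0 < q j := fun j => by
    exact_mod_cast (hq j ▸ GenContFract.one_le_of_den α j : (1 : ℝ) ≤ q j)
  have hq01 : q 0 ≤ q 1 := by
    exact_mod_cast (hq 0).trans_le (GenContFract.of_den_mono.trans_eq (hq 1).symm)
  have hblock : ∀ j θ, walk α θ (q j) ≤ 3 := fun j θ =>
    let ⟨_, hp, happ⟩ := exists_isCoprime_abs_mul_sub_le hα (hq j)
    walk_le_three_of_abs_mul_sub_le hp happ θ
  refine maxWalk_le (by omega) fun ℓ _ hℓk => ?_
  obtain ⟨θ', hsplit⟩ := exists_walk_le_div_mul_add (hblock n) θ ℓ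
  have htail := walk_le_of_lt (by norm_num) hpos hq01 hblock n θ' _ (Nat.mod_lt ℓ (hpos n))
  have hhead := natCast_div_le_ceil_div hℓk (q n)
  linarith

/-- For `q_n < k ≤ q_{n+1}`,
`M(θ, k) ≤ q_1 + 3⌈k/q_n⌉ + 3 Σ_{j=2}^n ⌈q_j/q_{j-1}⌉`. -/
theorem maxWalk_global_bound (α : ℝ) (hα : Irrational α)
    (hα01 : α ∈ Set.Ioo (0 : ℝ) 1) (q : ℕ → ℕ)
    (hq : ∀ j, (q j : ℝ) = (GenContFract.of α).dens j)
    (n : ℕ) (θ : ℝ) (k : ℕ) (hk1 : q n < k) (hk2 : k ≤ q (n + 1)) :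
    maxWalk α θ k ≤ (q 1 : ℤ) + 3 * ⌈(k : ℝ) / (q n : ℝ)⌉ +
      3 * ∑ j ∈ Finset.Icc 2 n, ⌈(q j : ℝ) / (q (j - 1) : ℝ)⌉ :=
  maxWalk_global_bound_general α hα q hq n θ k hk1
end
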